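/- If p = 2^k·n − 1 is prime with k ≥ 2, n odd, and m is a quadratic non-residue mod p, then the elliptic curve E: y² = x³ − mx over F_p has a point of order exactly 2^k. -/

import Mathlib

/-!
Since `p ≡ 3 (mod 4)`, `-1` is not a square in `𝔽_p`, so `x ↦ -x` flips the quadratic character
of the odd polynomial `x³ - m x`; the character sum vanishes and `E` has exactly
`p + 1 = 2^k n` points. As `m` is a non-residue, `(0, 0)` is the only point of order `2`.
In a finite abelian group with at most two elements killed by `2`, the `2^j`-torsion has at
most `2^j` elements (doubling maps it into the `2^(j-1)`-torsion with fibres of size `≤ 2`),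
while a Sylow `2`-subgroup puts `2^k` elements into the `2^k`-torsion. Hence some point is
killed by `2^k` but not by `2^(k-1)`.
-/

/-- The elliptic curve `y² = x³ - m·x` over `ZMod p`. -/
def Emx (p : ℕ) (m : ℤ) : WeierstrassCurve.Affine (ZMod p) :=
  { a₁ := 0, a₂ := 0, a₃ := 0, a₄ := -(m : ZMod p), a₆ := 0 }

open Finset

section Torsion

variable {G : Type*} [AddCommGroup G] [Fintype G] [DecidableEq G]

lemma card_nsmul_eq_le_card_nsmul_eq_zero (d : ℕ) (b : G) :
    #{x : G | d • x = b} ≤ #{x : G | d • x = 0} := by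
  by_cases hb : b ∈ Set.range (nsmulAddMonoidHom (α := G) d)
  · exact (AddMonoidHom.card_fiber_eq_of_mem_range (nsmulAddMonoidHom d) hb ⟨0, nsmul_zero d⟩).le
  · rw [card_eq_zero.mpr]
    · exact Nat.zero_le _
    · exact filter_eq_empty_iff.mpr fun x _ hx => hb ⟨x, hx⟩

lemma card_pow_nsmul_eq_zero_le (d j : ℕ) :
    #{x : G | d ^ j • x = 0} ≤ #{x : G | d • x = 0} ^ j := by
  induction j with
  | zero => simp [filter_eq']
  | succ j ih =>
    have hmaps : ∀ x ∈ ({x : G | d ^ (j + 1) • x = 0} : Finset G),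
        d • x ∈ ({x : G | d ^ j • x = 0} : Finset G) := by
      simp [← mul_nsmul', ← pow_succ]
    calc #{x : G | d ^ (j + 1) • x = 0}
        ≤ #{x : G | d • x = 0} * #{x : G | d ^ j • x = 0} :=
          card_le_mul_card_image_of_maps_to hmaps _ fun b _ =>
            (card_le_card (filter_subset_filter _ (subset_univ _))).trans
              (by simpa [filter_filter] using card_nsmul_eq_le_card_nsmul_eq_zero d b)
      _ ≤ #{x : G | d • x = 0} ^ (j + 1) := by rw [pow_succ']; gcongr

lemma pow_le_card_nsmul_eq_zero {p k : ℕ} [Fact p.Prime] (hdvd : p ^ k ∣ Fintype.card G) :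
    p ^ k ≤ #{x : G | p ^ k • x = 0} := by
  obtain ⟨H, hH⟩ := Sylow.exists_subgroup_card_pow_prime (G := Multiplicative G) p
    (by simpa using hdvd)
  set H' := AddSubgroup.toSubgroup.symm H
  have hH' : Nat.card H' = p ^ k := hH
  have hkill : (H' : Set G) ⊆ ({x : G | p ^ k • x = 0} : Finset G) := fun x hx => by
    simpa [hH'] using congrArg Subtype.val (card_nsmul_eq_zero' (G := H') (x := ⟨x, hx⟩))
  calc p ^ k = (H' : Set G).ncard := by rw [← hH']; exact (Nat.card_coe_set_eq _)
    _ ≤ #{x : G | p ^ k • x = 0} := by rw [← Set.ncard_coe_finset]; exact Set.ncard_le_ncard hkill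

theorem exists_addOrderOf_eq_prime_pow {p k : ℕ} [hp : Fact p.Prime]
    (hdvd : p ^ k ∣ Fintype.card G) (htors : #{x : G | p • x = 0} ≤ p) :
    ∃ x : G, addOrderOf x = p ^ k := by
  cases k with
  | zero => exact ⟨0, by simp⟩
  | succ j =>
    have hlt : #{x : G | p ^ j • x = 0} < #{x : G | p ^ (j + 1) • x = 0} :=
      calc #{x : G | p ^ j • x = 0} ≤ p ^ j :=
            (card_pow_nsmul_eq_zero_le p j).trans (Nat.pow_le_pow_left htors j)
        _ < p ^ (j + 1) := Nat.pow_lt_pow_right hp.out.one_lt j.lt_succ_self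
        _ ≤ _ := pow_le_card_nsmul_eq_zero hdvd
    obtain ⟨x, hx, hx'⟩ := exists_mem_notMem_of_card_lt_card hlt
    simp only [mem_filter, mem_univ, true_and] at hx hx'
    exact ⟨x, addOrderOf_eq_prime_pow hx' hx⟩

end Torsion

section OddFunction

variable {F : Type*} [Field F] [Fintype F] [DecidableEq F]

lemma sum_quadraticChar_comp_eq_zero_of_odd (hF : ¬IsSquare (-1 : F)) {f : F → F}
    (hf : ∀ x, f (-x) = -f x) : ∑ x, quadraticChar F (f x) = 0 := by
  have hχ : quadraticChar F (-1) = -1 := quadraticChar_neg_one_iff_not_isSquare.mpr hF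
  have hsymm : ∑ x, quadraticChar F (f x) = -∑ x, quadraticChar F (f x) :=
    calc ∑ x, quadraticChar F (f x) = ∑ x, quadraticChar F (f (-x)) :=
          (Equiv.sum_comp (Equiv.neg F) fun x => quadraticChar F (f x)).symm
      _ = -∑ x, quadraticChar F (f x) := by
          rw [← sum_neg_distrib]
          refine sum_congr rfl fun x _ => ?_
          rw [hf, neg_eq_neg_one_mul, map_mul, hχ, neg_one_mul]
  linarith

lemma natCard_sq_eq_of_odd (hF : ¬IsSquare (-1 : F)) {f : F → F}
    (hf : ∀ x, f (-x) = -f x) : Nat.card {P : F × F // P.2 ^ 2 = f P.1} = Fintype.card F := by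
  have hchar : ringChar F ≠ 2 := fun h => hF (FiniteField.isSquare_of_char_two h _)
  have hfiber (x : F) : (Fintype.card {y : F // y ^ 2 = f x} : ℤ) = quadraticChar F (f x) + 1 := by
    rw [← quadraticChar_card_sqrts hchar, Set.toFinset_card]
    rfl
  rw [Nat.card_congr (Equiv.subtypeProdEquivSigmaSubtype fun x y => y ^ 2 = f x),
    Nat.card_eq_fintype_card, Fintype.card_sigma]
  zify
  rw [sum_congr rfl fun x _ => hfiber x, sum_add_distrib,
    sum_quadraticChar_comp_eq_zero_of_odd hF hf]
  simp

end OddFunction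

open WeierstrassCurve.Affine

instance {R : Type*} [CommRing R] [Finite R] (W : WeierstrassCurve.Affine R) : Finite W.Point :=
  .of_equiv (Option _) W.nonsingularPointEquiv.symm

lemma WeierstrassCurve.Affine.natCard_point {R : Type*} [CommRing R] [Finite R]
    (W : WeierstrassCurve.Affine R) :
    Nat.card W.Point = Nat.card {P : R × R // W.Nonsingular P.1 P.2} + 1 := by
  rw [Nat.card_congr W.nonsingularPointEquiv]
  exact Finite.card_option

lemma ne_zero_of_not_isSquare {M₀ : Type*} [MulZeroClass M₀] {a : M₀} (h : ¬IsSquare a) :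
    a ≠ 0 :=
  fun h0 => h (h0 ▸ .zero)

lemma two_ne_zero_of_not_isSquare_neg_one {R : Type*} [CommRing R] (h : ¬IsSquare (-1 : R)) :
    (2 : R) ≠ 0 :=
  fun h2 => h ⟨1, by linear_combination -h2⟩

namespace Emx

variable {p : ℕ} {m : ℤ}

lemma Δ_eq : (Emx p m).Δ = 2 ^ 6 * (m : ZMod p) ^ 3 := by
  simp only [WeierstrassCurve.Δ, WeierstrassCurve.b₂, WeierstrassCurve.b₄,
    WeierstrassCurve.b₆, WeierstrassCurve.b₈, Emx]
  ring

lemma nonsingular_iff (hΔ : (Emx p m).Δ ≠ 0) {x y : ZMod p} :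
    (Emx p m).Nonsingular x y ↔ y ^ 2 = x ^ 3 - m * x := by
  rw [← equation_iff_nonsingular_of_Δ_ne_zero hΔ, equation_iff]
  simp only [Emx]
  constructor <;> intro h <;> linear_combination h

lemma nonsingular_zero_zero (hm0 : (m : ZMod p) ≠ 0) : (Emx p m).Nonsingular 0 0 := by
  simp [nonsingular_zero, Emx, hm0]

variable [Fact p.Prime]

lemma natCard_point (h1 : ¬IsSquare (-1 : ZMod p)) (hm0 : (m : ZMod p) ≠ 0) :
    Nat.card (Emx p m).Point = p + 1 := by
  have hΔ : (Emx p m).Δ ≠ 0 := by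
    rw [Δ_eq]
    exact mul_ne_zero (pow_ne_zero _ (two_ne_zero_of_not_isSquare_neg_one h1)) (pow_ne_zero _ hm0)
  have hiff (P : ZMod p × ZMod p) :
      (Emx p m).Nonsingular P.1 P.2 ↔ P.2 ^ 2 = P.1 ^ 3 - m * P.1 := nonsingular_iff hΔ
  rw [(Emx p m).natCard_point, Nat.card_congr (Equiv.subtypeEquivRight hiff),
    natCard_sq_eq_of_odd (f := fun x => x ^ 3 - m * x) h1 fun x => by ring, ZMod.card]

lemma eq_zero_or_eq_of_two_nsmul_eq_zero (h1 : ¬IsSquare (-1 : ZMod p))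
    (hm : ¬IsSquare (m : ZMod p)) {P : (Emx p m).Point} (hP : 2 • P = 0) :
    P = 0 ∨ P = .some 0 0 (nonsingular_zero_zero (ne_zero_of_not_isSquare hm)) := by
  rcases P with _ | ⟨x, y, h⟩
  · exact .inl rfl
  · right
    have hneg := eq_neg_of_add_eq_zero_left ((two_nsmul _).symm.trans hP)
    rw [Point.neg_some, Point.some.injEq] at hneg
    have hy : y = 0 := by
      have h2 := two_ne_zero_of_not_isSquare_neg_one h1
      have : 2 * y = 0 := by linear_combination (by simpa [negY, Emx] using hneg.2 : y = -y)
      simpa [h2] using this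
    have hx : x = 0 := by
      by_contra hx
      have hxy := ((Emx p m).equation_iff x y).mp h.1
      simp only [Emx, hy] at hxy
      exact hm ⟨x, mul_right_cancel₀ hx (by linear_combination hxy)⟩
    subst hx hy
    rfl

lemma card_two_nsmul_eq_zero_le [Fintype (Emx p m).Point] (h1 : ¬IsSquare (-1 : ZMod p))
    (hm : ¬IsSquare (m : ZMod p)) : #{P : (Emx p m).Point | 2 • P = 0} ≤ 2 := by
  calc #{P : (Emx p m).Point | 2 • P = 0}
        ≤ #{0, .some 0 0 (nonsingular_zero_zero (ne_zero_of_not_isSquare hm))} :=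
        card_le_card fun P hP => by
          rcases eq_zero_or_eq_of_two_nsmul_eq_zero h1 hm (mem_filter.mp hP).2 with rfl | rfl <;>
            simp
    _ ≤ 2 := card_le_two

end Emx

theorem stmt_9_general (k n p : ℕ) (hk : 2 ≤ k) (hp : p = 2 ^ k * n - 1)
    [Fact p.Prime] (m : ℤ) (hm : ¬ IsSquare (m : ZMod p)) :
    ∃ Q : (Emx p m).Point, addOrderOf Q = 2 ^ k := by
  have hp1 : p + 1 = 2 ^ k * n := by have := (Fact.out : p.Prime).two_le; omega
  have h1 : ¬IsSquare (-1 : ZMod p) := by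
    rw [ZMod.exists_sq_eq_neg_one_iff, not_not]
    obtain ⟨j, rfl⟩ := Nat.exists_eq_add_of_le hk
    have : p + 1 = 4 * (2 ^ j * n) := by rw [hp1, pow_add]; ring
    omega
  have := Fintype.ofFinite (Emx p m).Point
  refine exists_addOrderOf_eq_prime_pow ?_ (Emx.card_two_nsmul_eq_zero_le h1 hm)
  rw [← Nat.card_eq_fintype_card, Emx.natCard_point h1 (ne_zero_of_not_isSquare hm), hp1]
  exact dvd_mul_right _ _

/-- If `p = 2^k·n − 1` is prime with `k ≥ 2`, `n` odd, and `m` a quadratic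
non-residue mod `p`, then `E : y² = x³ − m·x` over `F_p` has a point of order
exactly `2^k`. -/
theorem stmt_9 (k n p : ℕ) (hk : 2 ≤ k) (hn : Odd n) (hp : p = 2 ^ k * n - 1)
    [Fact p.Prime] (m : ℤ) (hm0 : (m : ZMod p) ≠ 0) (hm : ¬ IsSquare (m : ZMod p)) :
    ∃ Q : (Emx p m).Point, addOrderOf Q = 2 ^ k :=
  stmt_9_general k n p hk hp m hm
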